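/- arXiv:math/0002153 — 3 statements merged into one kernel-verified Lean document; each statement's English description precedes it below -/
import Mathlib

section
/- Under the same hypotheses, Θ : X → Out(A) is injective if and only if for every χ ≠ ι the spectral subspace Π_χ(A^c) of the relative commutant A^c = F ∩ A' contains no unitary. -/
/-!
Two outer automorphisms `Θ(χ₁) = [Ad U_{χ₁}]` and `Θ(χ₂) = [Ad U_{χ₂}]` agree exactly when
`Ad U_{χ₁} = Ad (u U_{χ₂})` on `A` for some unitary `u ∈ A`, i.e. when the unitary
`U_{χ₁}* u U_{χ₂}` commutes with `A`. That unitary lies in the spectral subspace of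
`χ₁⁻¹ χ₂`, because `A` is the spectral subspace of the trivial character and spectral subspaces
multiply along characters. Conversely a unitary `v ∈ Π_χ(A^c)` yields the unitary
`u = U_χ v* U_ι* ∈ A`, which shows `Θ(χ) = Θ(ι)`.
-/

theorem StarSubalgebra.mem_unitary_iff {R A : Type*} [CommSemiring R] [StarRing R] [Semiring A]
    [StarRing A] [Algebra R A] [StarModule R A] {S : StarSubalgebra R A} {u : S} :
    u ∈ unitary S ↔ (u : A) ∈ unitary A := by
  simp only [Unitary.mem_iff, Subtype.ext_iff]
  exact Iff.rfl

theorem conj_eq_conj_iff_commute {R : Type*} [Monoid R] [StarMul R] {p q : R}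
    (hp : p ∈ unitary R) (hq : q ∈ unitary R) (a : R) :
    p * a * star p = q * a * star q ↔ Commute (star p * q) a := by
  have hpq : star p * q ∈ unitary R := mul_mem (Unitary.star_mem hp) hq
  rw [commute_unitary_iff_star_right_conjugate hpq, star_mul, star_star]
  constructor
  · intro h
    calc star p * q * a * (star q * p) = star p * (q * a * star q) * p := by simp only [mul_assoc]
      _ = a := by
        rw [← h, ← mul_assoc, ← mul_assoc, Unitary.star_mul_self_of_mem hp, one_mul, mul_assoc,
          Unitary.star_mul_self_of_mem hp, mul_one]
  · intro h
    calc p * a * star p = p * (star p * q * a * (star q * p)) * star p := by rw [h]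
      _ = q * a * star q := by
        simp only [← mul_assoc, Unitary.mul_star_self_of_mem hp, one_mul]
        simp only [mul_assoc, Unitary.mul_star_self_of_mem hp, mul_one]

section SpectralSubspace

variable {F G : Type*} [Semiring F] [StarRing F] [Algebra ℂ F] [Monoid G] [TopologicalSpace G]

def spectralSubspace (α : G → F ≃⋆ₐ[ℂ] F) (χ : PontryaginDual G) : Set F :=
  {x | ∀ g, α g x = (χ g : ℂ) • x}

variable {α : G → F ≃⋆ₐ[ℂ] F}

theorem mem_spectralSubspace_one_iff {x : F} :
    x ∈ spectralSubspace α 1 ↔ ∀ g, α g x = x := by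
  simp [spectralSubspace]

theorem mul_mem_spectralSubspace {χ ψ : PontryaginDual G} {x y : F}
    (hx : x ∈ spectralSubspace α χ) (hy : y ∈ spectralSubspace α ψ) :
    x * y ∈ spectralSubspace α (χ * ψ) := fun g => by
  rw [map_mul, hx g, hy g, smul_mul_smul_comm]
  rfl

theorem star_mem_spectralSubspace [StarModule ℂ F] {χ : PontryaginDual G} {x : F}
    (hx : x ∈ spectralSubspace α χ) : star x ∈ spectralSubspace α χ⁻¹ := fun g => by
  rw [map_star, hx g, star_smul]
  congr 1
  exact (Circle.coe_inv_eq_conj (χ g)).symm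

end SpectralSubspace

section InnerConjugacy

variable {F G : Type*} [Semiring F] [StarRing F] [Algebra ℂ F] [StarModule ℂ F]
  {A : StarSubalgebra ℂ F}

theorem coe_apply_eq_conj_iff_commute {ι : Type*} {U : ι → F} {β : ι → (A ≃⋆ₐ[ℂ] A)}
    (hUu : ∀ i, U i ∈ unitary F) (hβ : ∀ i (a : A), (β i a : F) = U i * (a : F) * star (U i))
    (i j : ι) {u : F} (hu : u ∈ unitary F) (a : A) :
    (β i a : F) = u * β j a * star u ↔ Commute (star (U i) * u * U j) a := by
  rw [hβ, hβ, mul_assoc (star (U i)),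
    ← conj_eq_conj_iff_commute (hUu i) (mul_mem hu (hUu j)), star_mul]
  simp only [mul_assoc]

variable [Monoid G] [TopologicalSpace G] {U : PontryaginDual G → F}
  {β : PontryaginDual G → (A ≃⋆ₐ[ℂ] A)} {α : G → F ≃⋆ₐ[ℂ] F}

theorem exists_unitary_conj_eq_of_mem_spectralSubspace
    (hA : ∀ f ∈ spectralSubspace α 1, f ∈ A) (hUu : ∀ χ, U χ ∈ unitary F)
    (hUspec : ∀ χ, U χ ∈ spectralSubspace α χ)
    (hβ : ∀ χ (a : A), (β χ a : F) = U χ * (a : F) * star (U χ)) {χ : PontryaginDual G} {v : F}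
    (hv : v ∈ unitary F) (hvA : ∀ a ∈ A, v * a = a * v) (hvχ : v ∈ spectralSubspace α χ) :
    ∃ u : A, u ∈ unitary A ∧ ∀ a : A, β χ a = u * β 1 a * star u := by
  set u := U χ * star v * star (U 1)
  have huA : u ∈ A := by
    refine hA u ?_
    rw [← mul_inv_cancel χ, ← mul_one (χ * χ⁻¹), ← inv_one]
    exact mul_mem_spectralSubspace (mul_mem_spectralSubspace (hUspec χ)
      (star_mem_spectralSubspace hvχ)) (star_mem_spectralSubspace (hUspec 1))
  have hu : u ∈ unitary F :=
    mul_mem (mul_mem (hUu χ) (Unitary.star_mem hv)) (Unitary.star_mem (hUu 1))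
  have hUu_eq : star (U χ) * u * U 1 = star v := by
    simp only [u, ← mul_assoc, Unitary.star_mul_self_of_mem (hUu χ), one_mul]
    rw [mul_assoc, Unitary.star_mul_self_of_mem (hUu 1), mul_one]
  refine ⟨⟨u, huA⟩, StarSubalgebra.mem_unitary_iff.2 hu, fun a => Subtype.ext ?_⟩
  change (β χ a : F) = u * β 1 a * star u
  rw [coe_apply_eq_conj_iff_commute hUu hβ χ 1 hu a, hUu_eq, ← star_star (a : F)]
  exact Commute.star_star (hvA _ (star_mem a.2))

theorem exists_unitary_mem_spectralSubspace_of_conj_eq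
    (hA : ∀ f ∈ A, f ∈ spectralSubspace α 1) (hUu : ∀ χ, U χ ∈ unitary F)
    (hUspec : ∀ χ, U χ ∈ spectralSubspace α χ)
    (hβ : ∀ χ (a : A), (β χ a : F) = U χ * (a : F) * star (U χ)) {χ₁ χ₂ : PontryaginDual G}
    {u : A} (hu : u ∈ unitary A) (huβ : ∀ a : A, β χ₁ a = u * β χ₂ a * star u) :
    ∃ v : F, v ∈ unitary F ∧ (∀ a ∈ A, v * a = a * v) ∧ v ∈ spectralSubspace α (χ₁⁻¹ * χ₂) := by
  have hu' : (u : F) ∈ unitary F := StarSubalgebra.mem_unitary_iff.1 hu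
  refine ⟨star (U χ₁) * u * U χ₂, ?_, fun a ha => ?_, ?_⟩
  · exact mul_mem (mul_mem (Unitary.star_mem (hUu χ₁)) hu') (hUu χ₂)
  · exact ((coe_apply_eq_conj_iff_commute hUu hβ χ₁ χ₂ hu' ⟨a, ha⟩).1
      congr(($(huβ ⟨a, ha⟩) : F))).eq
  · rw [← mul_one χ₁⁻¹]
    exact mul_mem_spectralSubspace (mul_mem_spectralSubspace
      (star_mem_spectralSubspace (hUspec χ₁)) (hA u u.2)) (hUspec χ₂)

end InnerConjugacy

theorem stmt1_general
    {F : Type*} [NormedRing F] [StarRing F] [NormedAlgebra ℂ F]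
    [StarModule ℂ F]
    {G : Type*} [CommGroup G] [TopologicalSpace G]
    (α : G → (F ≃⋆ₐ[ℂ] F))
    (A : StarSubalgebra ℂ F)
    (hA : ∀ f : F, f ∈ A ↔ ∀ g : G, α g f = f)
    (U : PontryaginDual G → F)
    (hUu : ∀ χ, U χ ∈ unitary F)
    (hUspec : ∀ χ g, α g (U χ) = (χ g : ℂ) • U χ)
    (β : PontryaginDual G → (A ≃⋆ₐ[ℂ] A))
    (hβ : ∀ χ (a : A), (β χ a : F) = U χ * (a : F) * star (U χ)) :
    -- Θ injective, i.e. Θ(χ₁) = Θ(χ₂) in Out A implies χ₁ = χ₂ ...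
    (∀ χ₁ χ₂ : PontryaginDual G,
        (∃ u : A, u ∈ unitary A ∧ ∀ a : A, β χ₁ a = u * (β χ₂ a) * star u) → χ₁ = χ₂)
    ↔
    -- ... iff no spectral subspace Π_χ(A^c), χ ≠ ι, contains a unitary
    (∀ χ : PontryaginDual G, χ ≠ 1 →
        ¬ ∃ v : F, v ∈ unitary F ∧ (∀ a : F, a ∈ A → v * a = a * v) ∧
            ∀ g : G, α g v = (χ g : ℂ) • v) := by
  have mem_A_iff : ∀ f, f ∈ A ↔ f ∈ spectralSubspace α 1 := fun f =>
    (hA f).trans mem_spectralSubspace_one_iff.symm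
  constructor
  · rintro hinj χ hχ ⟨v, hv, hvA, hvχ⟩
    exact hχ (hinj χ 1 (exists_unitary_conj_eq_of_mem_spectralSubspace
      (fun f => (mem_A_iff f).2) hUu hUspec hβ hv hvA hvχ))
  · rintro hns χ₁ χ₂ ⟨u, hu, huβ⟩
    by_contra hne
    exact hns (χ₁⁻¹ * χ₂) (mt inv_mul_eq_one.1 hne)
      (exists_unitary_mem_spectralSubspace_of_conj_eq (fun f => (mem_A_iff f).1)
        hUu hUspec hβ hu huβ)

/-- `Θ : X → Out A` is injective iff for every `χ ≠ ι` the spectral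
subspace `Π_χ(A^c)` of the relative commutant `A^c = F ∩ A'` contains no unitary. -/
theorem stmt1
    {F : Type*} [NormedRing F] [StarRing F] [CStarRing F] [NormedAlgebra ℂ F]
    [CompleteSpace F] [StarModule ℂ F]
    {G : Type*} [CommGroup G] [TopologicalSpace G] [IsTopologicalGroup G] [CompactSpace G]
    (α : G → (F ≃⋆ₐ[ℂ] F))
    (hα1 : ∀ f : F, α 1 f = f)
    (hαmul : ∀ g h (f : F), α (g * h) f = α g (α h f))
    (hcont : ∀ f : F, Continuous fun g => α g f)
    (A : StarSubalgebra ℂ F)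
    (hA : ∀ f : F, f ∈ A ↔ ∀ g : G, α g f = f)
    (U : PontryaginDual G → F)
    (hUu : ∀ χ, U χ ∈ unitary F)
    (hUspec : ∀ χ g, α g (U χ) = (χ g : ℂ) • U χ)
    (β : PontryaginDual G → (A ≃⋆ₐ[ℂ] A))
    (hβ : ∀ χ (a : A), (β χ a : F) = U χ * (a : F) * star (U χ)) :
    -- Θ injective, i.e. Θ(χ₁) = Θ(χ₂) in Out A implies χ₁ = χ₂ ...
    (∀ χ₁ χ₂ : PontryaginDual G,
        (∃ u : A, u ∈ unitary A ∧ ∀ a : A, β χ₁ a = u * (β χ₂ a) * star u) → χ₁ = χ₂)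
    ↔
    -- ... iff no spectral subspace Π_χ(A^c), χ ≠ ι, contains a unitary
    (∀ χ : PontryaginDual G, χ ≠ 1 →
        ¬ ∃ v : F, v ∈ unitary F ∧ (∀ a : F, a ∈ A → v * a = a * v) ∧
            ∀ g : G, α g v = (χ g : ℂ) • v) :=
  stmt1_general α A hA U hUu hUspec β hβ
end

section
/- Let A be a unital C*-algebra and γ₁, γ₂, γ₁', γ₂' automorphisms with γ₁' = Ad(A₀)∘γ₁ and γ₂' = Ad(B₀)∘γ₂ for unitaries A₀, B₀ ∈ U(A). If ε(γ₁,γ₂) and ε(γ₁',γ₂') are unitaries implementing the commutators γ₁γ₂γ₁⁻¹γ₂⁻¹ and γ₁'γ₂'γ₁'⁻¹γ₂'⁻¹ respectively, then A₀·γ₁(B₀)·ε(γ₁,γ₂) ≡ ε(γ₁',γ₂')·B₀·γ₂(A₀) modulo U(Z). -/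
/-- if γ₁' = Ad(A₀)∘γ₁ and γ₂' = Ad(B₀)∘γ₂ for unitaries A₀, B₀, and
ε(γ₁,γ₂), ε(γ₁',γ₂') implement the respective commutators, then
A₀·γ₁(B₀)·ε(γ₁,γ₂) ≡ ε(γ₁',γ₂')·B₀·γ₂(A₀) mod U(Z). -/
theorem stmt3
    {A : Type*} [NormedRing A] [StarRing A] [CStarRing A] [NormedAlgebra ℂ A]
    [CompleteSpace A] [StarModule ℂ A]
    (γ₁ γ₂ γ₁' γ₂' : A ≃⋆ₐ[ℂ] A)
    (A₀ B₀ : A)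
    (hA₀ : A₀ ∈ unitary A) (hB₀ : B₀ ∈ unitary A)
    -- γ₁' = Ad(A₀)∘γ₁ and γ₂' = Ad(B₀)∘γ₂
    (hγ₁' : ∀ a : A, γ₁' a = A₀ * γ₁ a * star A₀)
    (hγ₂' : ∀ a : A, γ₂' a = B₀ * γ₂ a * star B₀)
    (ε ε' : A)
    (hεu : ε ∈ unitary A) (hε'u : ε' ∈ unitary A)
    -- γ₁∘γ₂∘γ₁⁻¹∘γ₂⁻¹ = Ad ε(γ₁,γ₂)
    (hε : ∀ a : A, γ₁ (γ₂ (γ₁.symm (γ₂.symm a))) = ε * a * star ε)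
    -- γ₁'∘γ₂'∘γ₁'⁻¹∘γ₂'⁻¹ = Ad ε(γ₁',γ₂')
    (hε' : ∀ a : A, γ₁' (γ₂' (γ₁'.symm (γ₂'.symm a))) = ε' * a * star ε') :
    ∃ z : A, z ∈ unitary A ∧ z ∈ Set.center A ∧
      A₀ * γ₁ B₀ * ε = z * (ε' * B₀ * γ₂ A₀) := by
  have hA2 : A₀ * star A₀ = 1 := hA₀.2
  have hB2 : B₀ * star B₀ = 1 := hB₀.2
  have cA1 : ∀ x : A, star A₀ * (A₀ * x) = x := fun x => by rw [← mul_assoc, hA₀.1, one_mul]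
  have cA2 : ∀ x : A, A₀ * (star A₀ * x) = x := fun x => by rw [← mul_assoc, hA₀.2, one_mul]
  have cB1 : ∀ x : A, star B₀ * (B₀ * x) = x := fun x => by rw [← mul_assoc, hB₀.1, one_mul]
  have cB2 : ∀ x : A, B₀ * (star B₀ * x) = x := fun x => by rw [← mul_assoc, hB₀.2, one_mul]
  have cE1 : ∀ x : A, star ε * (ε * x) = x := fun x => by rw [← mul_assoc, hεu.1, one_mul]
  have cE2 : ∀ x : A, ε * (star ε * x) = x := fun x => by rw [← mul_assoc, hεu.2, one_mul]
  have cE'1 : ∀ x : A, star ε' * (ε' * x) = x := fun x => by rw [← mul_assoc, hε'u.1, one_mul]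
  have cE'2 : ∀ x : A, ε' * (star ε' * x) = x := fun x => by rw [← mul_assoc, hε'u.2, one_mul]
  -- formulas for the inverses of the perturbed automorphisms
  have hs1 : ∀ x : A, γ₁'.symm x = γ₁.symm (star A₀ * x * A₀) := by
    intro x
    have h : γ₁' (γ₁.symm (star A₀ * x * A₀)) = x := by
      rw [hγ₁', StarAlgEquiv.apply_symm_apply]
      simp [mul_assoc, cA2, hA2]
    conv_lhs => rw [← h]
    rw [StarAlgEquiv.symm_apply_apply]
  have hs2 : ∀ x : A, γ₂'.symm x = γ₂.symm (star B₀ * x * B₀) := by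
    intro x
    have h : γ₂' (γ₂.symm (star B₀ * x * B₀)) = x := by
      rw [hγ₂', StarAlgEquiv.apply_symm_apply]
      simp [mul_assoc, cB2, hB2]
    conv_lhs => rw [← h]
    rw [StarAlgEquiv.symm_apply_apply]
  set w : A := A₀ * γ₁ B₀ * ε * star (B₀ * γ₂ A₀) with hw
  -- (γ₁∘γ₂∘γ₁⁻¹) on A₀ and star A₀
  have hTA : γ₁ (γ₂ (γ₁.symm A₀)) = ε * γ₂ A₀ * star ε := by
    have h := hε (γ₂ A₀)
    rwa [StarAlgEquiv.symm_apply_apply] at h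
  have hTA' : γ₁ (γ₂ (γ₁.symm (star A₀))) = ε * star (γ₂ A₀) * star ε := by
    have h := hε (γ₂ (star A₀))
    rw [StarAlgEquiv.symm_apply_apply] at h
    rw [← map_star]
    exact h
  have key : ∀ a : A, w * a * star w = ε' * a * star ε' := by
    intro a
    have h := hε' a
    rw [hs2, hs1, hγ₂', hγ₁'] at h
    simp only [map_mul] at h
    simp only [hε, hTA, hTA'] at h
    rw [← h, hw]
    simp only [map_star, star_mul, star_star, mul_assoc, cA1, cA2, cB1, cB2, cE1, cE2]
  have hmapu : ∀ (σ : A ≃⋆ₐ[ℂ] A) (u : A), u ∈ unitary A → σ u ∈ unitary A := by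
    intro σ u hu
    exact ⟨by rw [← map_star, ← map_mul, hu.1, map_one],
           by rw [← map_star, ← map_mul, hu.2, map_one]⟩
  have hwu : w ∈ unitary A := by
    rw [hw]
    exact mul_mem (mul_mem (mul_mem hA₀ (hmapu γ₁ B₀ hB₀)) hεu)
      (Unitary.star_mem (mul_mem hB₀ (hmapu γ₂ A₀ hA₀)))
  have hvu : (B₀ * γ₂ A₀) ∈ unitary A := mul_mem hB₀ (hmapu γ₂ A₀ hA₀)
  have hcomm : ∀ g : A, g * (star ε' * w) = star ε' * w * g := by
    intro g
    have h3 := congrArg (fun x => star ε' * (x * w)) (key g)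
    simp only [mul_assoc, hwu.1, mul_one, cE'1] at h3
    rw [mul_assoc]
    exact h3.symm
  refine ⟨star ε' * w, mul_mem (Unitary.star_mem hε'u) hwu, ?_, ?_⟩
  · exact Semigroup.mem_center_iff.mpr hcomm
  · calc A₀ * γ₁ B₀ * ε
        = A₀ * γ₁ B₀ * ε * (star (B₀ * γ₂ A₀) * (B₀ * γ₂ A₀)) := by rw [hvu.1, mul_one]
      _ = w * (B₀ * γ₂ A₀) := by rw [hw]; simp [mul_assoc]
      _ = (ε' * (star ε' * w)) * (B₀ * γ₂ A₀) := by rw [cE'2]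
      _ = ((star ε' * w) * ε') * (B₀ * γ₂ A₀) := by rw [← hcomm ε']
      _ = (star ε' * w) * (ε' * B₀ * γ₂ A₀) := by simp [mul_assoc]
end

section
/- In the algebra F₀ constructed from a generalized 2-cocycle ω, the assignment U_χ* := ω(χ⁻¹,χ)*·U_{χ⁻¹}, extended by (aU_χ)* := U_χ*a*, defines an involution: (U_χ*)* = U_χ, (U_χ·a)* = a*·U_χ*, and (U_{χ₁}·U_{χ₂})* = U_{χ₂}*·U_{χ₁}* for all χ, χ₁, χ₂ ∈ X and a ∈ A. Moreover each U_χ is unitary: U_χ* = U_χ⁻¹. -/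
/-- ω is a generalized 2-cocycle for the system β of representatives:
unitary values, β_{χ₁}∘β_{χ₂} = Ad(ω(χ₁,χ₂))∘β_{χ₁χ₂}, normalization, cocycle equation. -/
def IsGenCocycle {A : Type*} [NormedRing A] [StarRing A] [CStarRing A] [NormedAlgebra ℂ A]
    [CompleteSpace A] [StarModule ℂ A] {X : Type*} [Group X]
    (β : X → (A ≃⋆ₐ[ℂ] A)) (ω : X → X → A) : Prop :=
  (∀ χ₁ χ₂, ω χ₁ χ₂ ∈ unitary A) ∧
  (∀ χ₁ χ₂ (a : A), β χ₁ (β χ₂ a) = ω χ₁ χ₂ * β (χ₁ * χ₂) a * star (ω χ₁ χ₂)) ∧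
  (∀ χ, ω 1 χ = 1 ∧ ω χ 1 = 1) ∧
  (∀ χ₁ χ₂ χ₃, ω χ₁ χ₂ * ω (χ₁ * χ₂) χ₃ = β χ₁ (ω χ₂ χ₃) * ω χ₁ (χ₂ * χ₃))

/-- The twisted product on F₀, the free left A-module on {U_χ : χ ∈ X}:
(a₁U_{χ₁})·(a₂U_{χ₂}) = a₁·β_{χ₁}(a₂)·ω(χ₁,χ₂)·U_{χ₁χ₂}. -/
noncomputable def crossedMul {A : Type*} [NormedRing A] [StarRing A] [CStarRing A]
    [NormedAlgebra ℂ A] [CompleteSpace A] [StarModule ℂ A] {X : Type*} [Group X]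
    (β : X → (A ≃⋆ₐ[ℂ] A)) (ω : X → X → A) (F G : X →₀ A) : X →₀ A :=
  F.sum fun χ₁ a₁ => G.sum fun χ₂ a₂ =>
    Finsupp.single (χ₁ * χ₂) (a₁ * β χ₁ a₂ * ω χ₁ χ₂)

/-- The involution on F₀: (aU_χ)* = U_χ*·a* with U_χ* := ω(χ⁻¹,χ)*·U_{χ⁻¹}, i.e.
(aU_χ)* = ω(χ⁻¹,χ)*·β_{χ⁻¹}(a*)·U_{χ⁻¹}. -/
noncomputable def crossedStar {A : Type*} [NormedRing A] [StarRing A] [CStarRing A]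
    [NormedAlgebra ℂ A] [CompleteSpace A] [StarModule ℂ A] {X : Type*} [Group X]
    (β : X → (A ≃⋆ₐ[ℂ] A)) (ω : X → X → A) (F : X →₀ A) : X →₀ A :=
  F.sum fun χ a => Finsupp.single χ⁻¹ (star (ω χ⁻¹ χ) * β χ⁻¹ (star a))

section Aux

variable {A : Type*} [NormedRing A] [StarRing A] [CStarRing A] [NormedAlgebra ℂ A]
    [CompleteSpace A] [StarModule ℂ A] {X : Type*} [Group X]
    (β : X → (A ≃⋆ₐ[ℂ] A)) (ω : X → X → A)

lemma crossedStar_single (χ : X) (a : A) :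
    crossedStar β ω (Finsupp.single χ a) =
      Finsupp.single χ⁻¹ (star (ω χ⁻¹ χ) * β χ⁻¹ (star a)) := by
  unfold crossedStar
  rw [Finsupp.sum_single_index]
  simp

lemma crossedMul_single (χ₁ χ₂ : X) (a₁ a₂ : A) :
    crossedMul β ω (Finsupp.single χ₁ a₁) (Finsupp.single χ₂ a₂) =
      Finsupp.single (χ₁ * χ₂) (a₁ * β χ₁ a₂ * ω χ₁ χ₂) := by
  unfold crossedMul
  rw [Finsupp.sum_single_index, Finsupp.sum_single_index] <;>
    simp [Finsupp.sum_single_index]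

end Aux

/-- U_χ* := ω(χ⁻¹,χ)*·U_{χ⁻¹}, extended by (aU_χ)* = U_χ*a*, defines an
involution on F₀: (U_χ*)* = U_χ, (U_χ·a)* = a*·U_χ*, (U_{χ₁}U_{χ₂})* = U_{χ₂}*U_{χ₁}*,
and each U_χ is unitary: U_χ* = U_χ⁻¹. -/
theorem stmt14
    {A : Type*} [NormedRing A] [StarRing A] [CStarRing A] [NormedAlgebra ℂ A]
    [CompleteSpace A] [StarModule ℂ A]
    {X : Type*} [CommGroup X]
    (β : X → (A ≃⋆ₐ[ℂ] A))
    (hβ1 : ∀ a : A, β 1 a = a)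
    (ω : X → X → A)
    (hω : IsGenCocycle β ω) :
    -- (U_χ*)* = U_χ
    (∀ χ : X, crossedStar β ω (crossedStar β ω (Finsupp.single χ (1 : A))) =
        Finsupp.single χ (1 : A)) ∧
    -- (U_χ·a)* = a*·U_χ*
    (∀ (χ : X) (a : A),
        crossedStar β ω (crossedMul β ω (Finsupp.single χ (1 : A)) (Finsupp.single 1 a)) =
          crossedMul β ω (Finsupp.single 1 (star a))
            (crossedStar β ω (Finsupp.single χ (1 : A)))) ∧
    -- (U_{χ₁}·U_{χ₂})* = U_{χ₂}*·U_{χ₁}*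
    (∀ χ₁ χ₂ : X,
        crossedStar β ω
            (crossedMul β ω (Finsupp.single χ₁ (1 : A)) (Finsupp.single χ₂ (1 : A))) =
          crossedMul β ω (crossedStar β ω (Finsupp.single χ₂ (1 : A)))
            (crossedStar β ω (Finsupp.single χ₁ (1 : A)))) ∧
    -- U_χ is unitary: U_χ·U_χ* = U_χ*·U_χ = 1
    (∀ χ : X,
        crossedMul β ω (Finsupp.single χ (1 : A))
            (crossedStar β ω (Finsupp.single χ (1 : A))) = Finsupp.single 1 1 ∧
        crossedMul β ω (crossedStar β ω (Finsupp.single χ (1 : A)))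
            (Finsupp.single χ (1 : A)) = Finsupp.single 1 1) := by
  obtain ⟨hu, hAd, hnorm, hcoc⟩ := hω
  -- basic unitary facts
  have hsu : ∀ χ₁ χ₂ : X, star (ω χ₁ χ₂) * ω χ₁ χ₂ = 1 := fun χ₁ χ₂ => (hu χ₁ χ₂).1
  have hus : ∀ χ₁ χ₂ : X, ω χ₁ χ₂ * star (ω χ₁ χ₂) = 1 := fun χ₁ χ₂ => (hu χ₁ χ₂).2
  -- key identity: β χ (ω χ⁻¹ χ) = ω χ χ⁻¹
  have key1 : ∀ χ : X, β χ (ω χ⁻¹ χ) = ω χ χ⁻¹ := by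
    intro χ
    have h := hcoc χ χ⁻¹ χ
    rw [mul_inv_cancel, inv_mul_cancel, (hnorm χ).1, (hnorm χ).2, mul_one, mul_one] at h
    exact h.symm
  refine ⟨?_, ?_, ?_, ?_⟩
  · -- (U_χ*)* = U_χ
    intro χ
    rw [crossedStar_single, crossedStar_single]
    simp only [star_one, map_one, mul_one, inv_inv, star_star]
    rw [key1 χ, hsu χ χ⁻¹]
  · -- (U_χ·a)* = a*·U_χ*
    intro χ a
    rw [crossedMul_single, crossedStar_single, crossedStar_single, crossedMul_single]
    simp only [star_one, map_one, mul_one, one_mul, (hnorm χ).2, (hnorm χ⁻¹).1, hβ1]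
    congr 1
    rw [← map_star, hAd χ⁻¹ χ (star a), inv_mul_cancel, hβ1, ← mul_assoc, ← mul_assoc,
      hsu χ⁻¹ χ, one_mul]
  · -- antimultiplicativity
    intro χ₁ χ₂
    rw [crossedMul_single, crossedStar_single, crossedStar_single, crossedStar_single,
      crossedMul_single]
    simp only [star_one, map_one, mul_one, one_mul]
    have hidx : (χ₁ * χ₂)⁻¹ = χ₂⁻¹ * χ₁⁻¹ := mul_inv_rev χ₁ χ₂
    rw [hidx]
    congr 1
    set σ : X := χ₂⁻¹ * χ₁⁻¹ with hσ
    have hσ' : σ = (χ₁ * χ₂)⁻¹ := by rw [hσ, mul_inv_rev]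
    -- E1: cocycle at (χ₂⁻¹, χ₁⁻¹, χ₁)
    have E1 : ω χ₂⁻¹ χ₁⁻¹ * ω σ χ₁ = β χ₂⁻¹ (ω χ₁⁻¹ χ₁) := by
      have h := hcoc χ₂⁻¹ χ₁⁻¹ χ₁
      rw [inv_mul_cancel, (hnorm χ₂⁻¹).2, mul_one] at h
      exact h
    -- E2: cocycle at (σ, χ₁, χ₂)
    have E2 : ω σ χ₁ * ω χ₂⁻¹ χ₂ = β σ (ω χ₁ χ₂) * ω σ (χ₁ * χ₂) := by
      have h := hcoc σ χ₁ χ₂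
      have : σ * χ₁ = χ₂⁻¹ := by rw [hσ]; group
      rw [this] at h
      exact h
    -- prove the starred identity and conclude via injectivity of star
    apply star_injective
    simp only [star_mul, star_star, ← map_star, star_mul]
    rw [← E2, ← E1, mul_assoc (ω χ₂⁻¹ χ₁⁻¹), ← mul_assoc (star (ω χ₂⁻¹ χ₁⁻¹)),
      hsu χ₂⁻¹ χ₁⁻¹, one_mul]
  · -- unitarity
    intro χ
    constructor
    · rw [crossedStar_single, crossedMul_single]
      simp only [star_one, map_one, mul_one, one_mul, mul_inv_cancel]
      rw [map_star, key1 χ, hsu χ χ⁻¹]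
    · rw [crossedStar_single, crossedMul_single]
      simp only [star_one, map_one, mul_one, one_mul, inv_mul_cancel]
      rw [hsu χ⁻¹ χ]
end
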